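/- For any partitions β and α, the composition K_β ∘ U_α equals the sum over all partitions λ of U_{s_{β/λ} ∗ s_α} ∘ K_λ, where ∗ denotes the Kronecker (internal) product of symmetric functions. -/

import Mathlib

/-!
Test both sides on the power sums `p_μ`. Every `K_f` has `p_μ` as an eigenvector,
`K_f p_μ = ⟨f, p_μ⟩ p_μ`, and a product of power sums is a power sum; with `D` adjoint to
multiplication this gives `K_f (x p_μ) = K_{D_{p_μ} f}(x) p_μ`. Expanding
`p_μ = ∑_λ ⟨s_λ, p_μ⟩ s_λ` turns `D_{p_μ} s_β` into `∑_λ ⟨s_λ, p_μ⟩ s_{β/λ}`, and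
`⟨s_λ, p_μ⟩ p_μ = K_λ p_μ`. The sum over `λ` is finite because `s_{β/λ} ∗ s_α` only sees the
finitely many `p`-coordinates of `s_α`, and `⟨s_{β/λ}, p_ν⟩` is the `s_λ`-coordinate of
`D_{p_ν} s_β`.
-/

open scoped TensorProduct Classical

noncomputable section

/-- The single-row Young diagram with `k` boxes, whose Schur function is `h_k`
and whose power sum is `p_k`. -/
def rowDiagram (k : ℕ) : YoungDiagram :=
  YoungDiagram.ofRowLens [k] (by intro i j _; simp)

/-- The quantity `z_λ = ∏ i^{m_i} m_i!` attached to a partition (Young diagram). -/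
def zee (μ : YoungDiagram) : ℚ :=
  ((μ.rowLens.prod * (μ.rowLens.dedup.map fun i => (μ.rowLens.count i).factorial).prod : ℕ) : ℚ)

/-- The ring of symmetric functions over `ℚ`, presented with its Schur basis `s`,
its power-sum basis `p`, the Hall inner product (for which the Schur functions are
orthonormal and `⟨p_λ, p_μ⟩ = δ_{λμ} z_λ`), the skewing operators `D f` (adjoint of
multiplication by `f`), and the Kronecker product `kron`
(determined by `p_λ ∗ p_μ = δ_{λμ} z_λ p_λ`). -/
structure SymmFn (Λ : Type*) [CommRing Λ] [Algebra ℚ Λ] where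
  /-- the Schur basis -/
  s : Module.Basis YoungDiagram ℚ Λ
  /-- the power-sum basis -/
  p : Module.Basis YoungDiagram ℚ Λ
  /-- the Hall inner product -/
  inner : Λ →ₗ[ℚ] Λ →ₗ[ℚ] ℚ
  inner_symm : ∀ f g, inner f g = inner g f
  inner_schur : ∀ μ ν, inner (s μ) (s ν) = if μ = ν then 1 else 0
  inner_power : ∀ μ ν, inner (p μ) (p ν) = if μ = ν then zee μ else 0
  power_mul : ∀ μ : YoungDiagram, p μ = (μ.rowLens.map fun k => p (rowDiagram k)).prod
  /-- the skewing operator `D f`, adjoint of multiplication by `f` -/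
  D : Λ → Λ →ₗ[ℚ] Λ
  D_adjoint : ∀ f g h, inner (D f g) h = inner g (f * h)
  /-- the Kronecker (internal) product -/
  kron : Λ →ₗ[ℚ] Λ →ₗ[ℚ] Λ
  kron_power : ∀ μ ν, kron (p μ) (p ν) = if μ = ν then zee μ • p μ else 0

namespace SymmFn

variable {Λ : Type*} [CommRing Λ] [Algebra ℚ Λ] (S : SymmFn Λ)

/-- The operator `U f` of multiplication by `f`. -/
def U (_S : SymmFn Λ) (f : Λ) : Λ →ₗ[ℚ] Λ := LinearMap.mulLeft ℚ f

/-- The skew Schur function `s_{α/θ} = D_{s_θ}(s_α)`. -/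
def skew (α θ : YoungDiagram) : Λ := S.D (S.s θ) (S.s α)

theorem _root_.LinearMap.finsum_apply {R M N ι : Type*} [CommSemiring R] [AddCommMonoid M]
    [Module R M] [AddCommMonoid N] [Module R N] {f : ι → M →ₗ[R] N}
    (hf : (Function.support f).Finite) (x : M) : (∑ᶠ i, f i) x = ∑ᶠ i, f i x :=
  (LinearMap.applyₗ x).toAddMonoidHom.map_finsum hf

theorem _root_.YoungDiagram.exists_rowLens_perm {l : List ℕ} (hl : ∀ x ∈ l, 0 < x) :
    ∃ ν : YoungDiagram, ν.rowLens.Perm l :=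
  have hperm := List.mergeSort_perm l (· ≥ ·)
  ⟨.ofRowLens _ l.sortedGE_mergeSort, by
    rw [YoungDiagram.rowLens_ofRowLens_eq_self fun x hx => hl x (hperm.subset hx)]
    exact hperm⟩

theorem exists_p_mul_p (μ ν : YoungDiagram) : ∃ ρ, S.p μ * S.p ν = S.p ρ := by
  obtain ⟨ρ, hρ⟩ := YoungDiagram.exists_rowLens_perm (l := μ.rowLens ++ ν.rowLens)
    (by simpa [or_imp, forall_and] using ⟨μ.pos_of_mem_rowLens, ν.pos_of_mem_rowLens⟩)
  refine ⟨ρ, ?_⟩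
  rw [S.power_mul, S.power_mul, S.power_mul, (hρ.map _).prod_eq, List.map_append, List.prod_append]

theorem inner_s_eq_repr (x : Λ) (l : YoungDiagram) : S.inner x (S.s l) = S.s.repr x l := by
  have : S.inner.flip (S.s l) = S.s.coord l :=
    S.s.ext fun μ => by simp [S.inner_schur, Finsupp.single_apply, eq_comm]
  exact DFunLike.congr_fun this x

theorem ext_inner_s {x y : Λ} (h : ∀ l, S.inner x (S.s l) = S.inner y (S.s l)) : x = y :=
  S.s.ext_elem fun l => by simpa only [inner_s_eq_repr] using h l

def Dₗ : Λ →ₗ[ℚ] Λ →ₗ[ℚ] Λ :=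
  LinearMap.mk₂ ℚ (fun f g => S.D f g)
    (fun f f' g => S.ext_inner_s fun l => by simp [S.D_adjoint, add_mul])
    (fun c f g => S.ext_inner_s fun l => by simp [S.D_adjoint])
    (fun f g g' => map_add _ g g') (fun c f g => map_smul _ c g)

theorem Dₗ_apply (f g : Λ) : S.Dₗ f g = S.D f g := rfl

theorem kron_p (f : Λ) (μ : YoungDiagram) :
    S.kron f (S.p μ) = S.inner f (S.p μ) • S.p μ := by
  have : S.kron.flip (S.p μ) = (S.inner.flip (S.p μ)).smulRight (S.p μ) :=
    S.p.ext fun ν => by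
      rcases eq_or_ne ν μ with rfl | h
      · simp [S.kron_power, S.inner_power]
      · simp [S.kron_power, S.inner_power, h]
  exact DFunLike.congr_fun this f

theorem p_repr_kron (f x : Λ) (ν : YoungDiagram) :
    S.p.repr (S.kron f x) ν = S.p.repr x ν * S.inner f (S.p ν) := by
  have : (S.p.coord ν).comp (S.kron f) = S.inner f (S.p ν) • S.p.coord ν :=
    S.p.ext fun μ => by
      rcases eq_or_ne μ ν with rfl | h
      · simp [S.kron_p]
      · simp [S.kron_p, h]
  simpa [mul_comm] using DFunLike.congr_fun this x

theorem kron_mul_p (f x : Λ) (μ : YoungDiagram) :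
    S.kron f (x * S.p μ) = S.kron (S.D (S.p μ) f) x * S.p μ := by
  suffices (S.kron f).comp (LinearMap.mulRight ℚ (S.p μ)) =
      (LinearMap.mulRight ℚ (S.p μ)).comp (S.kron (S.D (S.p μ) f)) from
    DFunLike.congr_fun this x
  refine S.p.ext fun ν => ?_
  obtain ⟨ρ, hρ⟩ := S.exists_p_mul_p ν μ
  simp only [LinearMap.comp_apply, LinearMap.mulRight_apply, hρ, S.kron_p, smul_mul_assoc,
    S.D_adjoint, mul_comm (S.p μ)]

theorem inner_skew_p (β l ν : YoungDiagram) :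
    S.inner (S.skew β l) (S.p ν) = S.s.repr (S.D (S.p ν) (S.s β)) l := by
  rw [skew, S.D_adjoint, mul_comm, ← S.D_adjoint, S.inner_s_eq_repr]

theorem finite_support_kron_skew (β : YoungDiagram) (x : Λ) :
    (Function.support fun l => S.kron (S.skew β l) x).Finite := by
  refine ((S.p.repr x).support.biUnion fun ν => (S.s.repr (S.D (S.p ν) (S.s β))).support)
    |>.finite_toSet.subset fun l hl => ?_
  obtain ⟨ν, hν⟩ := Finsupp.ne_iff.mp ((LinearEquiv.map_ne_zero_iff S.p.repr).mpr hl)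
  rw [p_repr_kron, inner_skew_p] at hν
  simp only [Finset.coe_biUnion, Set.mem_iUnion, Finset.mem_coe, Finsupp.mem_support_iff]
  exact ⟨ν, left_ne_zero_of_mul hν, right_ne_zero_of_mul hν⟩

theorem kron_s_mul_p (β : YoungDiagram) (x : Λ) (μ : YoungDiagram) :
    S.kron (S.s β) (x * S.p μ) = ∑ᶠ l, S.kron (S.skew β l) x * S.kron (S.s l) (S.p μ) := by
  set c := S.s.repr (S.p μ)
  have hD : S.D (S.p μ) (S.s β) = ∑ l ∈ c.support, c l • S.skew β l := by
    conv_lhs => rw [← S.Dₗ_apply, ← S.s.linearCombination_repr (S.p μ)]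
    simp [Finsupp.linearCombination_apply, Finsupp.sum, S.Dₗ_apply, skew, c]
  have hsupp : (Function.support fun l => S.kron (S.skew β l) x * S.kron (S.s l) (S.p μ))
      ⊆ c.support := fun l hl => by
    rw [Finset.mem_coe, Finsupp.mem_support_iff]
    rintro hl0
    simp [S.kron_p, S.inner_symm (S.s l), S.inner_s_eq_repr, c, hl0] at hl
  rw [S.kron_mul_p, hD, finsum_eq_sum_of_support_subset _ hsupp]
  simp [map_sum, Finset.sum_mul, S.kron_p, S.inner_symm (S.s _), S.inner_s_eq_repr, c]

/-- Commutation relation `K_β ∘ U_α = ∑_λ U_{s_{β/λ} ∗ s_α} ∘ K_λ`. -/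
theorem kron_comp_mul (α β : YoungDiagram) :
    (S.kron (S.s β)) ∘ₗ (S.U (S.s α)) =
      ∑ᶠ l : YoungDiagram, (S.U (S.kron (S.skew β l) (S.s α))) ∘ₗ (S.kron (S.s l)) := by
  have hfin : (Function.support fun l : YoungDiagram =>
      (S.U (S.kron (S.skew β l) (S.s α))) ∘ₗ (S.kron (S.s l))).Finite :=
    (S.finite_support_kron_skew β (S.s α)).subset fun l hl h0 =>
      hl (by ext; simp [U, h0])
  refine S.p.ext fun μ => ?_
  rw [LinearMap.finsum_apply hfin]
  exact S.kron_s_mul_p β (S.s α) μ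

end SymmFn
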